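/- Let α satisfy φ < α < 2, where φ = (1 + √5)/2 is the golden ratio, and let n₁, n₂, m₁, m₂ be positive integers with (α − 1)·n₂ ≤ n₁. Then G_α(n₁, m₁) + H_α(n₂, m₂) + n₁ + n₂ ≤ H_α(n₁ + n₂, m₁ + m₂), where G_α(n, m) = n·(d_α − 1 + c_α·log₂ m) and H_α(n, m) = n·(d_α + c_α·log₂ m). -/

import Mathlib

open Real

/-- The constant `c_α = (α+1)/((α+1)·log₂(α+1) − α·log₂ α)`. -/
noncomputable def cA (α : ℝ) : ℝ :=
  (α + 1) / ((α + 1) * logb 2 (α + 1) - α * logb 2 α)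

/-- `k₀(α)` is the least `ℓ ∈ ℕ` such that `(α² − α − 1)/(α − 1) ≥ α^(−ℓ)`. -/
noncomputable def k0 (α : ℝ) : ℕ :=
  sInf {ℓ : ℕ | (α ^ 2 - α - 1) / (α - 1) ≥ α ^ (-(ℓ : ℝ))}

/-- The constant `d_α = 2^(k₀(α)+1)·max{k₀(α)+1, 3}·(2α − 1)/(α − 1) + 1`. -/
noncomputable def dA (α : ℝ) : ℝ :=
  2 ^ (k0 α + 1) * max ((k0 α : ℝ) + 1) 3 * (2 * α - 1) / (α - 1) + 1

/-- `G_α(n, m) = n·(d_α − 1 + c_α·log₂ m)`. -/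
noncomputable def G (α : ℝ) (n m : ℕ) : ℝ := (n : ℝ) * (dA α - 1 + cA α * logb 2 m)

/-- `H_α(n, m) = n·(d_α + c_α·log₂ m)`. -/
noncomputable def H (α : ℝ) (n m : ℕ) : ℝ := (n : ℝ) * (dA α + cA α * logb 2 m)

/-! The constant `d_α` cancels, and the claim becomes `n₂ ≤ c_α · (N log₂(m₁ + m₂) − n₁ log₂ m₁ −
n₂ log₂ m₂)` with `N = n₁ + n₂`. By the log-sum inequality the bracket is at least `N · h(n₂ / N)`,
where `h` is the binary entropy in bits, and concavity of `h` between its values at `0`, `1/2`, `1`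
gives `h(x) ≥ x` for `x ≤ 2/3`; here `n₂ / N ≤ 1/α < 2/3`. Finally `c_α = 1 / h(1/(α + 1)) ≥ 1`. -/

theorem log_sum_inequality {p q u v : ℝ} (hp : 0 < p) (hq : 0 < q) (hu : 0 < u) (hv : 0 < v) :
    (p + q) * log ((p + q) / (u + v)) ≤ p * log (p / u) + q * log (q / v) := by
  have hS : 0 < p + q := by positivity
  -- Jensen for the concave `log` at `u / p`, `v / q` with weights `p / (p + q)`, `q / (p + q)`.
  have hJensen := strictConcaveOn_log_Ioi.concaveOn.2 (Set.mem_Ioi.2 (div_pos hu hp))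
    (Set.mem_Ioi.2 (div_pos hv hq)) (div_pos hp hS).le (div_pos hq hS).le
    (by field_simp)
  have hmix : p / (p + q) * (u / p) + q / (p + q) * (v / q) = (u + v) / (p + q) := by
    field_simp
  simp only [smul_eq_mul, hmix] at hJensen
  rw [div_mul_eq_mul_div, div_mul_eq_mul_div, ← add_div, div_le_iff₀ hS] at hJensen
  have huv : u + v ≠ 0 := by positivity
  simp only [log_div hp.ne' hu.ne', log_div hq.ne' hv.ne', log_div hS.ne' huv,
    log_div hu.ne' hp.ne', log_div hv.ne' hq.ne', log_div huv hS.ne'] at hJensen ⊢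
  linarith

theorem two_mul_mul_log_two_le_binEntropy {x : ℝ} (hx₀ : 0 ≤ x) (hx : x ≤ 2⁻¹) :
    2 * x * log 2 ≤ binEntropy x := by
  have h := strictConcave_binEntropy.concaveOn.2 (show (2⁻¹ : ℝ) ∈ Set.Icc 0 1 by norm_num)
    (show (0 : ℝ) ∈ Set.Icc 0 1 by norm_num) (show 0 ≤ 2 * x by positivity)
    (show 0 ≤ 1 - 2 * x by linarith) (by ring)
  simp only [smul_eq_mul, binEntropy_two_inv, binEntropy_zero] at h
  rw [show 2 * x * 2⁻¹ + (1 - 2 * x) * 0 = x by ring] at h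
  linarith

theorem add_mul_binEntropy_div_add {p q : ℝ} (hp : 0 < p) (hq : 0 < q) :
    (p + q) * binEntropy (q / (p + q)) = (p + q) * log (p + q) - p * log p - q * log q := by
  have hS : 0 < p + q := by positivity
  rw [binEntropy, show 1 - q / (p + q) = p / (p + q) by field_simp; ring, inv_div, inv_div,
    log_div hS.ne' hq.ne', log_div hS.ne' hp.ne']
  field_simp
  ring

theorem mul_log_two_le_binEntropy {x : ℝ} (hx₀ : 0 ≤ x) (hx : x ≤ 2 / 3) :
    x * log 2 ≤ binEntropy x := by
  have hlog2 : 0 < log 2 := log_pos one_lt_two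
  rcases le_total x 2⁻¹ with hx' | hx'
  · nlinarith [two_mul_mul_log_two_le_binEntropy hx₀ hx']
  · have h := two_mul_mul_log_two_le_binEntropy (x := 1 - x) (by linarith) (by linarith)
    rw [binEntropy_one_sub] at h
    nlinarith

noncomputable def mergeGain (p q u v : ℝ) : ℝ :=
  (p + q) * logb 2 (u + v) - p * logb 2 u - q * logb 2 v

theorem le_mergeGain {p q u v : ℝ} (hp : 0 < p) (hq : 0 < q) (hu : 0 < u) (hv : 0 < v)
    (hqp : q ≤ 2 * p) : q ≤ mergeGain p q u v := by
  have hS : 0 < p + q := by positivity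
  have hlog2 : 0 < log 2 := log_pos one_lt_two
  have hsum := log_sum_inequality hp hq hu hv
  rw [log_div hS.ne' (by positivity), log_div hp.ne' hu.ne', log_div hq.ne' hv.ne'] at hsum
  have hentropy : q / (p + q) * log 2 ≤ binEntropy (q / (p + q)) :=
    mul_log_two_le_binEntropy (by positivity) (by rw [div_le_iff₀ hS]; linarith)
  have hnats : q * log 2 ≤ (p + q) * log (u + v) - p * log u - q * log v := calc
    q * log 2 = (p + q) * (q / (p + q) * log 2) := by field_simp
    _ ≤ (p + q) * binEntropy (q / (p + q)) := by gcongr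
    _ = (p + q) * log (p + q) - p * log p - q * log q := add_mul_binEntropy_div_add hp hq
    _ ≤ (p + q) * log (u + v) - p * log u - q * log v := by linarith
  have hgain : mergeGain p q u v = ((p + q) * log (u + v) - p * log u - q * log v) / log 2 := by
    simp only [mergeGain, logb]
    ring
  rwa [hgain, le_div_iff₀ hlog2]

theorem one_le_cA {α : ℝ} (hα : 0 < α) : 1 ≤ cA α := by
  have hlog2 : 0 < log 2 := log_pos one_lt_two
  have hx₀ : 0 < 1 / (α + 1) := by positivity
  have hx₁ : 1 / (α + 1) < 1 := by rw [div_lt_one (by positivity)]; linarith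
  have hD : (α + 1) * logb 2 (α + 1) - α * logb 2 α
      = (α + 1) * binEntropy (1 / (α + 1)) / log 2 := by
    rw [add_mul_binEntropy_div_add hα one_pos, log_one, logb, logb]
    ring
  rw [cA, hD, one_le_div (by have := binEntropy_pos hx₀ hx₁; positivity)]
  calc (α + 1) * binEntropy (1 / (α + 1)) / log 2 ≤ (α + 1) * log 2 / log 2 := by
        gcongr; exact binEntropy_le_log_two
    _ = α + 1 := by field_simp

theorem H_add_sub_G_sub_H (α : ℝ) (n₁ n₂ m₁ m₂ : ℕ) :
    H α (n₁ + n₂) (m₁ + m₂) - (G α n₁ m₁ + H α n₂ m₂ + n₁ + n₂)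
      = cA α * mergeGain n₁ n₂ m₁ m₂ - n₂ := by
  simp only [G, H, mergeGain]
  push_cast
  ring

theorem GHalpha_bound_a_general (α : ℝ) (hφ : (1 + Real.sqrt 5) / 2 < α)
    (n₁ n₂ m₁ m₂ : ℕ) (hn₁ : 0 < n₁) (hn₂ : 0 < n₂) (hm₁ : 0 < m₁) (hm₂ : 0 < m₂)
    (h : (α - 1) * n₂ ≤ (n₁ : ℝ)) :
    G α n₁ m₁ + H α n₂ m₂ + n₁ + n₂ ≤ H α (n₁ + n₂) (m₁ + m₂) := by
  have hα : 3 / 2 < α := by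
    have : 2 < √5 := (lt_sqrt zero_le_two).2 (by norm_num)
    linarith
  have hn₂_le : (n₂ : ℝ) ≤ 2 * n₁ := by nlinarith [(Nat.cast_pos.2 hn₂ : (0 : ℝ) < n₂)]
  have hgain : (n₂ : ℝ) ≤ mergeGain n₁ n₂ m₁ m₂ :=
    le_mergeGain (by positivity) (by positivity) (by positivity) (by positivity) hn₂_le
  have hscaled : (n₂ : ℝ) ≤ cA α * mergeGain n₁ n₂ m₁ m₂ :=
    hgain.trans (le_mul_of_one_le_left ((Nat.cast_nonneg n₂).trans hgain) (one_le_cA (by linarith)))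
  linarith [H_add_sub_G_sub_H α n₁ n₂ m₁ m₂]

/-- Lemma 17(a): for `φ < α < 2`, if `(α−1)·n₂ ≤ n₁` then
`G_α(n₁,m₁) + H_α(n₂,m₂) + n₁ + n₂ ≤ H_α(n₁+n₂, m₁+m₂)`. -/
theorem GHalpha_bound_a (α : ℝ) (hφ : (1 + Real.sqrt 5) / 2 < α) (hα2 : α < 2)
    (n₁ n₂ m₁ m₂ : ℕ) (hn₁ : 0 < n₁) (hn₂ : 0 < n₂) (hm₁ : 0 < m₁) (hm₂ : 0 < m₂)
    (h : (α - 1) * n₂ ≤ (n₁ : ℝ)) :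
    G α n₁ m₁ + H α n₂ m₂ + n₁ + n₂ ≤ H α (n₁ + n₂) (m₁ + m₂) :=
  GHalpha_bound_a_general α hφ n₁ n₂ m₁ m₂ hn₁ hn₂ hm₁ hm₂ h
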